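/- Let Φ = (φ_{ij}) be a symmetric 2×2 polynomial matrix and ρ a C¹ positive function on a domain Ω ⊂ ℝ² satisfying the Pearson equation div(ρΦ) = ρ(ψ₁, ψ₂), i.e., ∂_x(ρφ₁₁) + ∂_y(ρφ₂₁) = ρψ₁ and ∂_x(ρφ₁₂) + ∂_y(ρφ₂₂) = ρψ₂. Suppose moreover Φ satisfies φ₁₁ ∂_xΦ + φ₂₁ ∂_yΦ = Φ∇(φ₁₁, φ₂₁) and φ₁₂ ∂_xΦ + φ₂₂ ∂_yΦ = Φ∇(φ₁₂, φ₂₂). Then ρ₁ := ρΦ satisfies the matrix Pearson equation div(ρ₁ ⊗ Φ) = ρ₁(ψ₁^{(1)}, ψ₂^{(1)}), where ψ₁^{(1)} = I₂ ⊗ ψ₁ + ∇(φ₁₁, φ₂₁) ⊗ I₁ and ψ₂^{(1)} = I₂ ⊗ ψ₂ + ∇(φ₁₂, φ₂₂) ⊗ I₁ (these are 2×2 polynomial matrices). -/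

import Mathlib

open Matrix MvPolynomial
open scoped Kronecker

/-!
Entry `(i, (c, j))` of `div(ρΦ ⊗ Φ)` is `∂ₓ(ρ φ_{0c} φ_{ij}) + ∂_y(ρ φ_{1c} φ_{ij})`. The Leibniz
rule splits it into `(∂ₓ(ρ φ_{0c}) + ∂_y(ρ φ_{1c})) φ_{ij}`, which the Pearson equation turns into
`ρ ψ_c φ_{ij}`, plus `ρ (φ_{0c} ∂ₓφ_{ij} + φ_{1c} ∂_yφ_{ij})`, which the structural condition
turns into `ρ (Φ ∇(φ_{0c}, φ_{1c}))_{ij}`.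
-/

noncomputable section

abbrev F2 : Type := ℝ × ℝ → ℝ

/-- Evaluation of a polynomial in two variables as a function on `ℝ²`. -/
def toFun (q : MvPolynomial (Fin 2) ℝ) : F2 := fun z => MvPolynomial.eval ![z.1, z.2] q

/-- Partial derivative with respect to the first coordinate. -/
def pdx (f : F2) : F2 := fun z => fderiv ℝ f z (1, 0)

/-- Partial derivative with respect to the second coordinate. -/
def pdy (f : F2) : F2 := fun z => fderiv ℝ f z (0, 1)

/-- The block divergence: for a matrix with rows indexed by `Fin 2 × a`
(two stacked block rows), `divM S = ∂ₓ(top block) + ∂_y(bottom block)`. -/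
def divM {a b : Type*} (S : Matrix (Fin 2 × a) b F2) : Matrix a b F2 :=
  Matrix.of fun i j => pdx (S (0, i) j) + pdy (S (1, i) j)

/-- `∇(φ_{1,c+1}, φ_{2,c+1})`, the `2 × 2` matrix whose columns are the gradients of
the entries of the `c`-th column of `Φ`. -/
def gradPair (Φ : Matrix (Fin 2) (Fin 2) (MvPolynomial (Fin 2) ℝ)) (c : Fin 2) :
    Matrix (Fin 2) (Fin 2) F2 :=
  Matrix.of fun a b => (if a = 0 then pdx else pdy) (toFun (Φ b c))

theorem differentiable_toFun (q : MvPolynomial (Fin 2) ℝ) : Differentiable ℝ (toFun q) := by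
  unfold toFun
  induction q using MvPolynomial.induction_on with
  | C a => simp only [eval_C]; exact differentiable_const a
  | add p q hp hq => simp only [map_add]; exact hp.add hq
  | mul_X p i hp =>
    simp only [map_mul, eval_X]
    fin_cases i
    · exact hp.mul differentiable_fst
    · exact hp.mul differentiable_snd

theorem fderiv_fun_mul_apply {𝕜 E : Type*} [NontriviallyNormedField 𝕜] [NormedAddCommGroup E]
    [NormedSpace 𝕜 E] {f g : E → 𝕜} {z : E} (hf : DifferentiableAt 𝕜 f z)
    (hg : DifferentiableAt 𝕜 g z) (v : E) :
    fderiv 𝕜 (fun w => f w * g w) z v = fderiv 𝕜 f z v * g z + f z * fderiv 𝕜 g z v := by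
  rw [fderiv_fun_mul hf hg]
  simp only [_root_.add_apply, _root_.smul_apply, smul_eq_mul]
  ring

theorem pdx_mul_add_pdy_mul {a b g : F2} {z : ℝ × ℝ} (ha : DifferentiableAt ℝ a z)
    (hb : DifferentiableAt ℝ b z) (hg : DifferentiableAt ℝ g z) :
    pdx (a * g) z + pdy (b * g) z =
      (pdx a z + pdy b z) * g z + (a z * pdx g z + b z * pdy g z) := by
  simp only [pdx, pdy]
  rw [Pi.mul_def, Pi.mul_def, fderiv_fun_mul_apply ha hg, fderiv_fun_mul_apply hb hg]
  ring

theorem divM_kronecker_apply {n a b : Type*} (A : Matrix (Fin 2) n F2) (B : Matrix a b F2)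
    (i : a) (c : n) (j : b) :
    divM (A ⊗ₖ B) i (c, j) = pdx (A 0 c * B i j) + pdy (A 1 c * B i j) :=
  rfl

theorem pearson_step_general
    (Ω : Set (ℝ × ℝ)) (hΩ : IsOpen Ω)
    (ρ : ℝ × ℝ → ℝ) (hρ : ContDiffOn ℝ 1 ρ Ω)
    (Φ : Matrix (Fin 2) (Fin 2) (MvPolynomial (Fin 2) ℝ))
    (ψ : Fin 2 → MvPolynomial (Fin 2) ℝ)
    (hPearson : ∀ c : Fin 2, ∀ z ∈ Ω,
      pdx (fun w => ρ w * toFun (Φ 0 c) w) z + pdy (fun w => ρ w * toFun (Φ 1 c) w) z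
        = ρ z * toFun (ψ c) z)
    (hstruct : ∀ c : Fin 2, ∀ i j : Fin 2, ∀ z ∈ Ω,
      toFun (Φ 0 c) z * pdx (toFun (Φ i j)) z + toFun (Φ 1 c) z * pdy (toFun (Φ i j)) z
        = (Φ.map toFun * gradPair Φ c) i j z) :
    ∀ c i j : Fin 2, ∀ z ∈ Ω,
      divM ((Matrix.of fun i' j' : Fin 2 => fun w => ρ w * toFun (Φ i' j') w)
          ⊗ₖ Φ.map toFun) i (c, j) z
        = ((Matrix.of fun i' j' : Fin 2 => fun w => ρ w * toFun (Φ i' j') w)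
            * (toFun (ψ c) • (1 : Matrix (Fin 2) (Fin 2) F2) + gradPair Φ c)) i j z := by
  intro c i j z hz
  have hρ_diff : DifferentiableAt ℝ ρ z :=
    (hρ.contDiffAt (hΩ.mem_nhds hz)).differentiableAt one_ne_zero
  have hρφ_diff (r : Fin 2) : DifferentiableAt ℝ (fun w => ρ w * toFun (Φ r c) w) z :=
    hρ_diff.mul (differentiable_toFun _ z)
  have hρΦ : (of fun i' j' w => ρ w * toFun (Φ i' j') w) = ρ • Φ.map toFun := rfl
  rw [divM_kronecker_apply]
  simp only [of_apply, map_apply, Pi.add_apply]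
  rw [pdx_mul_add_pdy_mul (hρφ_diff 0) (hρφ_diff 1) (differentiable_toFun _ z),
    hPearson c z hz, hρΦ, smul_mul, mul_add, Matrix.mul_smul, Matrix.mul_one]
  simp only [Matrix.smul_apply, Matrix.add_apply, smul_eq_mul, Pi.mul_apply, Pi.add_apply,
    map_apply]
  linear_combination ρ z * hstruct c i j z hz

/-- If the symmetric polynomial matrix `Φ` and the `C¹` weight `ρ` satisfy the
Pearson equation `div(ρΦ) = ρ(ψ₁,ψ₂)` on an open `Ω` together with the structural
conditions `φ_{1,c}∂ₓΦ + φ_{2,c}∂_yΦ = Φ∇(φ_{1,c}, φ_{2,c})` (`c = 1,2`), then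
`ρ₁ := ρΦ` satisfies the matrix Pearson equation
`div(ρ₁ ⊗ Φ) = ρ₁ (ψ₁^{(1)}, ψ₂^{(1)})` with
`ψ_c^{(1)} = ψ_c · I₂ + ∇(φ_{1,c}, φ_{2,c})`. -/
theorem pearson_step
    (Ω : Set (ℝ × ℝ)) (hΩ : IsOpen Ω)
    (ρ : ℝ × ℝ → ℝ) (hρ : ContDiffOn ℝ 1 ρ Ω) (hρpos : ∀ z ∈ Ω, 0 < ρ z)
    (Φ : Matrix (Fin 2) (Fin 2) (MvPolynomial (Fin 2) ℝ)) (hΦ : Φᵀ = Φ)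
    (ψ : Fin 2 → MvPolynomial (Fin 2) ℝ)
    (hPearson : ∀ c : Fin 2, ∀ z ∈ Ω,
      pdx (fun w => ρ w * toFun (Φ 0 c) w) z + pdy (fun w => ρ w * toFun (Φ 1 c) w) z
        = ρ z * toFun (ψ c) z)
    (hstruct : ∀ c : Fin 2, ∀ i j : Fin 2, ∀ z ∈ Ω,
      toFun (Φ 0 c) z * pdx (toFun (Φ i j)) z + toFun (Φ 1 c) z * pdy (toFun (Φ i j)) z
        = (Φ.map toFun * gradPair Φ c) i j z) :
    ∀ c i j : Fin 2, ∀ z ∈ Ω,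
      divM ((Matrix.of fun i' j' : Fin 2 => fun w => ρ w * toFun (Φ i' j') w)
          ⊗ₖ Φ.map toFun) i (c, j) z
        = ((Matrix.of fun i' j' : Fin 2 => fun w => ρ w * toFun (Φ i' j') w)
            * (toFun (ψ c) • (1 : Matrix (Fin 2) (Fin 2) F2) + gradPair Φ c)) i j z :=
  pearson_step_general Ω hΩ ρ hρ Φ ψ hPearson hstruct

end
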